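/- Let (X,S) be an association scheme with T := O_θ(S) = O^θ(S) ≅ C_p × C_p, and let i, j, k be three pairwise distinct cosets (points) with L_{ij}, L_{jk}, L_{ik} all proper nontrivial subgroups of T. If L_{jk} = L_{ji}, then L_{ij} = L_{ik}; consequently, for i ≠ j, j ∈ L_i(M) implies L_i(M) = L_j(L_{ji}). -/
import Mathlib


open scoped Classical

/-- The diagonal relation `1_X`. -/
def diagRel (X : Type*) : Set (X × X) := {p | p.1 = p.2}

/-- The converse relation `s*`. -/
def conv {X : Type*} (s : Set (X × X)) : Set (X × X) := {p | (p.2, p.1) ∈ s}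

/-- The intersection number `c_{st}^u`, well-defined for association schemes. -/
noncomputable def inum {X : Type*} (s t u : Set (X × X)) : ℕ :=
  sSup {n | ∃ p ∈ u, n = Nat.card {z : X | (p.1, z) ∈ s ∧ (z, p.2) ∈ t}}

/-- `(X, S)` is an association scheme. -/
def IsScheme {X : Type*} (S : Set (Set (X × X))) : Prop :=
  (∀ x y : X, ∃! s, s ∈ S ∧ (x, y) ∈ s) ∧
  (∀ s ∈ S, s.Nonempty) ∧
  diagRel X ∈ S ∧
  (∀ s ∈ S, conv s ∈ S) ∧
  (∀ s ∈ S, ∀ t ∈ S, ∀ u ∈ S, ∀ p ∈ u, ∀ q ∈ u,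
    Nat.card {z : X | (p.1, z) ∈ s ∧ (z, p.2) ∈ t} =
      Nat.card {z : X | (q.1, z) ∈ s ∧ (z, q.2) ∈ t})

/-- The complex product `PQ` of subsets of `S`. -/
noncomputable def cprod {X : Type*} (S P Q : Set (Set (X × X))) : Set (Set (X × X)) :=
  {u ∈ S | ∃ p ∈ P, ∃ q ∈ Q, inum p q u ≠ 0}

/-- The valency `n_s`. -/
noncomputable def nval {X : Type*} (s : Set (X × X)) : ℕ :=
  sSup {n | ∃ x : X, n = Nat.card {y : X | (x, y) ∈ s}}

/-- `T` is a closed subset of `S`. -/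
def IsClosedSub {X : Type*} (S T : Set (Set (X × X))) : Prop :=
  T.Nonempty ∧ T ⊆ S ∧ cprod S T T ⊆ T

/-- `T` is strongly normal in `S`. -/
def IsStronglyNormal {X : Type*} (S T : Set (Set (X × X))) : Prop :=
  IsClosedSub S T ∧ ∀ s ∈ S, cprod S (cprod S {conv s} T) {s} ⊆ T

/-- The thin radical `O_θ(S)`. -/
noncomputable def thinRadical {X : Type*} (S : Set (Set (X × X))) : Set (Set (X × X)) :=
  {s ∈ S | nval s = 1}

/-- The thin residue `O^θ(S)`. -/
noncomputable def thinResidue {X : Type*} (S : Set (Set (X × X))) : Set (Set (X × X)) :=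
  ⋂₀ {T | IsStronglyNormal S T}

/-- `T` is thin: all valencies `1`. -/
def IsThin {X : Type*} (T : Set (Set (X × X))) : Prop := ∀ t ∈ T, nval t = 1

/-- The left stabilizer `L(s) = {t ∈ T | ts = {s}}`. -/
noncomputable def lstab {X : Type*} (S T : Set (Set (X × X))) (s : Set (X × X)) :
    Set (Set (X × X)) := {t ∈ T | cprod S {t} {s} = {s}}

/-- `e` is an isomorphism from `C_p × C_p` onto the thin closed subset `T`
(with the relational product as group operation). -/
def IsoElemAb {X : Type*} (S T : Set (Set (X × X))) (p : ℕ)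
    (e : ZMod p × ZMod p → Set (X × X)) : Prop :=
  (∀ a, e a ∈ T) ∧ Function.Injective e ∧ (∀ t ∈ T, ∃ a, e a = t) ∧
  e 0 = diagRel X ∧ ∀ a b, cprod S {e a} {e b} = {e (a + b)}

/-- The coset `xT`. -/
def coset {X : Type*} (T : Set (Set (X × X))) (x : X) : Set X := {y | ∃ t ∈ T, (x, y) ∈ t}

/-- The point set `X/T`. -/
def pts {X : Type*} (T : Set (Set (X × X))) : Set (Set X) := {C | ∃ x, C = coset T x}

/-- `L_{ij}` for the cosets of `x` and `y`: the left stabilizer of any relation containing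
`(x, y)`. -/
noncomputable def pairStab {X : Type*} (S T : Set (Set (X × X))) (x y : X) :
    Set (Set (X × X)) :=
  {t ∈ T | ∀ s ∈ S, (x, y) ∈ s → cprod S {t} {s} = {s}}

/-- The line `L_i(M)` through the coset of `x` determined by the subgroup `M < T`. -/
noncomputable def lineOf {X : Type*} (S T : Set (Set (X × X))) (x : X)
    (M : Set (Set (X × X))) : Set (Set X) :=
  insert (coset T x) {C | ∃ y, C = coset T y ∧ coset T y ≠ coset T x ∧ pairStab S T x y = M}

/-- The set of lines of the incidence structure on `X/T`. -/
noncomputable def linesOf {X : Type*} (S T : Set (Set (X × X))) : Set (Set (Set X)) :=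
  {ℓ | ∃ x M, IsClosedSub S M ∧ M ⊆ T ∧ M ≠ {diagRel X} ∧ M ≠ T ∧
    ℓ = lineOf S T x M ∧ 2 ≤ Nat.card ℓ}

set_option linter.unusedSectionVars false
section Dev
variable {X : Type*} [Fintype X] {S T : Set (Set (X × X))}

lemma mem_conv {s : Set (X × X)} {x y : X} : (x, y) ∈ conv s ↔ (y, x) ∈ s := Iff.rfl

lemma conv_conv (s : Set (X × X)) : conv (conv s) = s := rfl

lemma sch_ex (hS : IsScheme S) (x y : X) : ∃ s ∈ S, (x, y) ∈ s := by
  obtain ⟨s, hs, -⟩ := hS.1 x y; exact ⟨s, hs⟩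

lemma sch_uniq (hS : IsScheme S) {s t : Set (X × X)} {x y : X}
    (hs : s ∈ S) (ht : t ∈ S) (h1 : (x, y) ∈ s) (h2 : (x, y) ∈ t) : s = t := by
  obtain ⟨u, -, hu⟩ := hS.1 x y
  rw [hu s ⟨hs, h1⟩, hu t ⟨ht, h2⟩]

lemma X_nonempty (hS : IsScheme S) : Nonempty X := by
  obtain ⟨⟨x, y⟩, -⟩ := hS.2.1 _ hS.2.2.1
  exact ⟨x⟩

lemma inum_eq (hS : IsScheme S) {s t u : Set (X × X)} {x y : X}
    (hs : s ∈ S) (ht : t ∈ S) (hu : u ∈ S) (hxy : (x, y) ∈ u) :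
    inum s t u = Nat.card {z : X | (x, z) ∈ s ∧ (z, y) ∈ t} := by
  have : {n | ∃ p ∈ u, n = Nat.card {z : X | (p.1, z) ∈ s ∧ (z, p.2) ∈ t}}
      = {Nat.card {z : X | (x, z) ∈ s ∧ (z, y) ∈ t}} := by
    ext n
    constructor
    · rintro ⟨q, hq, rfl⟩
      exact hS.2.2.2.2 s hs t ht u hu q hq (x, y) hxy
    · rintro rfl; exact ⟨(x, y), hxy, rfl⟩
  rw [inum, this, csSup_singleton]

lemma mem_cprod_iff (hS : IsScheme S) {s t u : Set (X × X)} {x y : X}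
    (hs : s ∈ S) (ht : t ∈ S) (hu : u ∈ S) (hxy : (x, y) ∈ u) :
    u ∈ cprod S {s} {t} ↔ ∃ z, (x, z) ∈ s ∧ (z, y) ∈ t := by
  have hcard : inum s t u = Nat.card {z : X | (x, z) ∈ s ∧ (z, y) ∈ t} :=
    inum_eq hS hs ht hu hxy
  constructor
  · rintro ⟨-, p, hp, q, hq, hne⟩
    rw [Set.mem_singleton_iff] at hp hq
    rw [hp, hq, hcard] at hne
    have : Nonempty {z : X | (x, z) ∈ s ∧ (z, y) ∈ t} := (Nat.card_ne_zero.mp hne).1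
    obtain ⟨z, hz⟩ := this
    exact ⟨z, hz⟩
  · rintro ⟨z, hz1, hz2⟩
    refine ⟨hu, s, rfl, t, rfl, ?_⟩
    rw [hcard]
    have hne : Nonempty {z : X | (x, z) ∈ s ∧ (z, y) ∈ t} := ⟨z, hz1, hz2⟩
    exact Nat.card_ne_zero.mpr ⟨hne, inferInstance⟩

lemma nval_eq (hS : IsScheme S) {s : Set (X × X)} (hs : s ∈ S) (x : X) :
    nval s = Nat.card {y : X | (x, y) ∈ s} := by
  have hconst : ∀ x' : X, Nat.card {y : X | (x', y) ∈ s} = Nat.card {y : X | (x, y) ∈ s} := by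
    intro x'
    have h5 := hS.2.2.2.2 s hs (conv s) (hS.2.2.2.1 s hs) _ hS.2.2.1
      (x', x') rfl (x, x) rfl
    have e1 : {z : X | (x', z) ∈ s ∧ (z, x') ∈ conv s} = {y : X | (x', y) ∈ s} := by
      ext z; simp [mem_conv, and_self]
    have e2 : {z : X | (x, z) ∈ s ∧ (z, x) ∈ conv s} = {y : X | (x, y) ∈ s} := by
      ext z; simp [mem_conv, and_self]
    rw [e1, e2] at h5; exact h5
  have : {n | ∃ x' : X, n = Nat.card {y : X | (x', y) ∈ s}}
      = {Nat.card {y : X | (x, y) ∈ s}} := by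
    ext n
    constructor
    · rintro ⟨x', rfl⟩; exact hconst x'
    · rintro rfl; exact ⟨x, rfl⟩
  rw [nval, this, csSup_singleton]

lemma deg_pos (hS : IsScheme S) {s : Set (X × X)} (hs : s ∈ S) (x : X) :
    ∃ y, (x, y) ∈ s := by
  obtain ⟨⟨a, b⟩, hab⟩ := hS.2.1 s hs
  have h1 : nval s = Nat.card {y : X | (a, y) ∈ s} := nval_eq hS hs a
  have h2 : nval s = Nat.card {y : X | (x, y) ∈ s} := nval_eq hS hs x
  have : Nat.card {y : X | (a, y) ∈ s} ≠ 0 := by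
    have hne : Nonempty {y : X | (a, y) ∈ s} := ⟨b, hab⟩
    exact Nat.card_ne_zero.mpr ⟨hne, inferInstance⟩
  rw [← h1, h2] at this
  obtain ⟨y, hy⟩ := Nat.card_ne_zero.mp this |>.1
  exact ⟨y, hy⟩

lemma nval_pos (hS : IsScheme S) {s : Set (X × X)} (hs : s ∈ S) : nval s ≠ 0 := by
  obtain ⟨x⟩ := X_nonempty hS
  obtain ⟨y, hy⟩ := deg_pos hS hs x
  rw [nval_eq hS hs x]
  have hne : Nonempty {y : X | (x, y) ∈ s} := ⟨y, hy⟩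
  exact Nat.card_ne_zero.mpr ⟨hne, inferInstance⟩

lemma nval_conv (hS : IsScheme S) {s : Set (X × X)} (hs : s ∈ S) :
    nval (conv s) = nval s := by
  have hXpos : 0 < Fintype.card X := by
    obtain ⟨x⟩ := X_nonempty hS; exact Fintype.card_pos_iff.mpr ⟨x⟩
  have key : ∀ r : Set (X × X), r ∈ S → Nat.card r = nval r * Fintype.card X := by
    intro r hr
    have e : r ≃ (Σ x : X, {y : X | (x, y) ∈ r}) :=
      { toFun := fun q => ⟨q.1.1, q.1.2, q.2⟩
        invFun := fun q => ⟨(q.1, q.2.1), q.2.2⟩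
        left_inv := fun q => rfl
        right_inv := fun q => rfl }
    rw [Nat.card_congr e, Nat.card_eq_fintype_card, Fintype.card_sigma]
    have : ∀ x : X, Fintype.card {y : X | (x, y) ∈ r} = nval r := by
      intro x
      rw [← Nat.card_eq_fintype_card, ← nval_eq hS hr x]
    simp only [this, Finset.sum_const, Finset.card_univ, smul_eq_mul, mul_comm]
  have hc : Nat.card (conv s) = Nat.card s := by
    apply Nat.card_congr
    exact { toFun := fun q => ⟨(q.1.2, q.1.1), q.2⟩
            invFun := fun q => ⟨(q.1.2, q.1.1), q.2⟩
            left_inv := fun q => rfl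
            right_inv := fun q => rfl }
  have h1 := key s hs
  have h2 := key (conv s) (hS.2.2.2.1 s hs)
  rw [hc, h1] at h2
  exact Nat.eq_of_mul_eq_mul_right hXpos h2.symm

/-- the function associated to a thin relation -/
noncomputable def tf (t : Set (X × X)) (x : X) : X :=
  if h : ∃ y, (x, y) ∈ t then h.choose else x

lemma thin_exu (hS : IsScheme S) {t : Set (X × X)} (ht : t ∈ S) (h1 : nval t = 1)
    (x : X) : ∃! y, (x, y) ∈ t := by
  have := nval_eq hS ht x
  rw [h1] at this
  obtain ⟨a, ha⟩ := Nat.card_eq_one_iff_exists.mp this.symm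
  refine ⟨a.1, a.2, fun y hy => ?_⟩
  have := ha ⟨y, hy⟩
  exact congrArg Subtype.val this

lemma tf_mem (hS : IsScheme S) {t : Set (X × X)} (ht : t ∈ S) (h1 : nval t = 1)
    (x : X) : (x, tf t x) ∈ t := by
  have h : ∃ y, (x, y) ∈ t := (thin_exu hS ht h1 x).exists
  rw [tf, dif_pos h]
  exact h.choose_spec

lemma tf_eq (hS : IsScheme S) {t : Set (X × X)} (ht : t ∈ S) (h1 : nval t = 1)
    {x y : X} (h : (x, y) ∈ t) : tf t x = y := by
  obtain ⟨w, hw, huniq⟩ := thin_exu hS ht h1 x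
  rw [huniq _ (tf_mem hS ht h1 x), huniq _ h]

/-- Lemma A: left product by a thin relation is a single relation, given by composition. -/
lemma thin_mul (hS : IsScheme S) {t s : Set (X × X)} (ht : t ∈ S) (h1 : nval t = 1)
    (hs : s ∈ S) :
    ∃ u ∈ S, cprod S {t} {s} = {u} ∧ ∀ x y, ((x, y) ∈ u ↔ (tf t x, y) ∈ s) := by
  have htc : conv t ∈ S := hS.2.2.2.1 t ht
  have h1c : nval (conv t) = 1 := by rw [nval_conv hS ht]; exact h1
  have hgf : ∀ x : X, tf (conv t) (tf t x) = x := by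
    intro x
    exact tf_eq hS htc h1c (mem_conv.mpr (tf_mem hS ht h1 x))
  -- every element of the product is the composed relation
  have key : ∀ u' ∈ cprod S {t} {s}, ∀ x y : X, ((x, y) ∈ u' ↔ (tf t x, y) ∈ s) := by
    intro u' hu' x y
    have hu'S : u' ∈ S := hu'.1
    constructor
    · intro hxy
      obtain ⟨z, hz1, hz2⟩ := (mem_cprod_iff hS ht hs hu'S hxy).mp hu'
      rw [tf_eq hS ht h1 hz1]; exact hz2
    · intro hfy
      -- first: s ∈ cprod S {conv t} {u'}
      obtain ⟨⟨α, β⟩, hαβ⟩ := hS.2.1 u' hu'S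
      obtain ⟨z, hz1, hz2⟩ := (mem_cprod_iff hS ht hs hu'S hαβ).mp hu'
      have hzfa : z = tf t α := (tf_eq hS ht h1 hz1).symm
      have hsmem : s ∈ cprod S {conv t} {u'} := by
        refine (mem_cprod_iff hS htc hu'S hs (x := tf t α) (y := β) ?_).mpr
          ⟨α, mem_conv.mpr (tf_mem hS ht h1 α), hαβ⟩
        rw [← hzfa]; exact hz2
      obtain ⟨w, hw1, hw2⟩ := (mem_cprod_iff hS htc hu'S hs hfy).mp hsmem
      have : w = x := by
        have h := tf_eq hS htc h1c hw1
        exact h.symm.trans (hgf x)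
      rwa [this] at hw2
  obtain ⟨x₀⟩ := X_nonempty hS
  obtain ⟨y₀, hy₀⟩ := deg_pos hS hs (tf t x₀)
  obtain ⟨u, ⟨huS, hu⟩, -⟩ := hS.1 x₀ y₀
  have humem : u ∈ cprod S {t} {s} :=
    (mem_cprod_iff hS ht hs huS hu).mpr ⟨tf t x₀, tf_mem hS ht h1 x₀, hy₀⟩
  refine ⟨u, huS, ?_, key u humem⟩
  ext v
  simp only [Set.mem_singleton_iff]
  constructor
  · intro hv
    ext ⟨x, y⟩
    rw [key v hv x y, key u humem x y]
  · rintro rfl; exact humem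
lemma mem_diag {x y : X} : (x, y) ∈ diagRel X ↔ x = y := Iff.rfl

lemma tf_inv (hS : IsScheme S) {t : Set (X × X)} (ht : t ∈ S) (h1 : nval t = 1) (x : X) :
    tf (conv t) (tf t x) = x := by
  have htc : conv t ∈ S := hS.2.2.2.1 t ht
  have h1c : nval (conv t) = 1 := by rw [nval_conv hS ht]; exact h1
  exact tf_eq hS htc h1c (mem_conv.mpr (tf_mem hS ht h1 x))

lemma tf_injective (hS : IsScheme S) {t : Set (X × X)} (ht : t ∈ S) (h1 : nval t = 1) :
    Function.Injective (tf t) := by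
  intro a b h
  have := congrArg (tf (conv t)) h
  rwa [tf_inv hS ht h1, tf_inv hS ht h1] at this

/-- every strongly normal closed subset contains the diagonal -/
lemma diag_mem_SN (hS : IsScheme S) {W : Set (Set (X × X))}
    (hW : IsStronglyNormal S W) : diagRel X ∈ W := by
  obtain ⟨w, hw⟩ := hW.1.1
  have hwS : w ∈ S := hW.1.2.1 hw
  choose F hF using fun x => deg_pos hS hwS x
  obtain ⟨x₀⟩ := X_nonempty hS
  obtain ⟨m, n, hmn, heq⟩ := Finite.exists_ne_map_eq_of_infinite (fun n : ℕ => F^[n] x₀)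
  wlog hlt : m < n generalizing m n
  · exact this n m hmn.symm heq.symm (by omega)
  have key : ∀ j, m < j → j ≤ n → ∃ v ∈ W, (F^[m] x₀, F^[j] x₀) ∈ v := by
    intro j hj1 hj2
    induction j with
    | zero => omega
    | succ k ih =>
      rcases Nat.lt_or_ge m k with hk | hk
      · obtain ⟨v, hvW, hv⟩ := ih hk (by omega)
        obtain ⟨u, ⟨huS, hu⟩, -⟩ := hS.1 (F^[m] x₀) (F^[k+1] x₀)
        refine ⟨u, ?_, hu⟩
        apply hW.1.2.2
        refine ⟨huS, v, hvW, w, hw, ?_⟩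
        rw [inum_eq hS (hW.1.2.1 hvW) hwS huS hu]
        have hne : Nonempty {z : X | (F^[m] x₀, z) ∈ v ∧ (z, F^[k+1] x₀) ∈ w} := by
          refine ⟨F^[k] x₀, hv, ?_⟩
          rw [Function.iterate_succ_apply']
          exact hF _
        exact Nat.card_ne_zero.mpr ⟨hne, inferInstance⟩
      · have hmk : m = k := by omega
        refine ⟨w, hw, ?_⟩
        rw [Function.iterate_succ_apply', ← hmk]
        exact hF _
  obtain ⟨v, hvW, hv⟩ := key n hlt le_rfl
  rw [← heq] at hv
  have : v = diagRel X := sch_uniq hS (hW.1.2.1 hvW) hS.2.2.1 hv rfl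
  rwa [← this]

/-- `s* s ⊆ T` since `T` is the thin residue -/
lemma convmul_sub_T (hS : IsScheme S) (hres : thinResidue S = T) {s : Set (X × X)}
    (hs : s ∈ S) : cprod S {conv s} {s} ⊆ T := by
  intro u hu
  rw [← hres]
  intro W hW
  apply hW.2 s hs
  obtain ⟨huS, a, ha, b, hb, hne⟩ := hu
  rw [Set.mem_singleton_iff] at ha hb
  rw [ha, hb] at hne
  refine ⟨huS, conv s, ?_, s, rfl, hne⟩
  -- conv s ∈ cprod S {conv s} W
  have hcs : conv s ∈ S := hS.2.2.2.1 s hs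
  refine ⟨hcs, conv s, rfl, diagRel X, diag_mem_SN hS hW, ?_⟩
  obtain ⟨⟨x, y⟩, hxy⟩ := hS.2.1 (conv s) hcs
  rw [inum_eq hS hcs hS.2.2.1 hcs hxy]
  have hne2 : Nonempty {z : X | (x, z) ∈ conv s ∧ (z, y) ∈ diagRel X} := ⟨y, hxy, rfl⟩
  exact Nat.card_ne_zero.mpr ⟨hne2, inferInstance⟩

lemma mulconv_sub_T (hS : IsScheme S) (hres : thinResidue S = T) {s : Set (X × X)}
    (hs : s ∈ S) : cprod S {s} {conv s} ⊆ T :=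
  convmul_sub_T hS hres (hS.2.2.2.1 s hs)

lemma conv_mem_cprod (hS : IsScheme S) {a b u : Set (X × X)}
    (ha : a ∈ S) (hb : b ∈ S) (hu : u ∈ S) (h : u ∈ cprod S {a} {b}) :
    conv u ∈ cprod S {conv b} {conv a} := by
  obtain ⟨⟨x, y⟩, hxy⟩ := hS.2.1 u hu
  obtain ⟨z, hz1, hz2⟩ := (mem_cprod_iff hS ha hb hu hxy).mp h
  exact (mem_cprod_iff hS (hS.2.2.2.1 b hb) (hS.2.2.2.1 a ha) (hS.2.2.2.1 u hu)
    (mem_conv.mpr hxy)).mpr ⟨z, mem_conv.mpr hz2, mem_conv.mpr hz1⟩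

lemma right_mul_eq (hS : IsScheme S) {s t u u' : Set (X × X)} (hs : s ∈ S) (ht : t ∈ S)
    (h1 : nval t = 1) (hu : u ∈ cprod S {s} {t}) (hu' : u' ∈ cprod S {s} {t}) : u = u' := by
  have htc : conv t ∈ S := hS.2.2.2.1 t ht
  have h1c : nval (conv t) = 1 := by rw [nval_conv hS ht]; exact h1
  obtain ⟨v, hvS, hv, -⟩ := thin_mul hS htc h1c (hS.2.2.2.1 s hs)
  have c1 := conv_mem_cprod hS hs ht hu.1 hu
  have c2 := conv_mem_cprod hS hs ht hu'.1 hu'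
  rw [hv, Set.mem_singleton_iff] at c1 c2
  have : conv u = conv u' := c1.trans c2.symm
  have := congrArg conv this
  rwa [conv_conv, conv_conv] at this

section Tgroup
variable {p : ℕ} {e : ZMod p × ZMod p → Set (X × X)}

variable (he : IsoElemAb S T p e) (hrad : thinRadical S = T) (hS : IsScheme S)
include he hrad hS

lemma T_S {t : Set (X × X)} (htT : t ∈ T) : t ∈ S := by
  rw [← hrad] at htT; exact htT.1

lemma T_thin {t : Set (X × X)} (htT : t ∈ T) : nval t = 1 := by
  rw [← hrad] at htT; exact htT.2

lemma e_S (a : ZMod p × ZMod p) : e a ∈ S := T_S he hrad hS (he.1 a)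

lemma e_thin (a : ZMod p × ZMod p) : nval (e a) = 1 := T_thin he hrad hS (he.1 a)

lemma conv_e (a : ZMod p × ZMod p) : conv (e a) = e (-a) := by
  have h0 : cprod S {e a} {e (-a)} = {e 0} := by
    rw [he.2.2.2.2 a (-a), add_neg_cancel]
  have hdiag : diagRel X ∈ cprod S {e a} {e (-a)} := by
    rw [h0, he.2.2.2.1]; rfl
  have hsub : conv (e a) ⊆ e (-a) := by
    rintro ⟨y, x⟩ hyx
    have hxy : (x, y) ∈ e a := hyx
    obtain ⟨z, hz1, hz2⟩ := (mem_cprod_iff hS (e_S he hrad hS a) (e_S he hrad hS (-a))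
      hS.2.2.1 (show (x, x) ∈ diagRel X from rfl)).mp hdiag
    have : z = y := by
      rw [← tf_eq hS (e_S he hrad hS a) (e_thin he hrad hS a) hz1,
        tf_eq hS (e_S he hrad hS a) (e_thin he hrad hS a) hxy]
    rw [← this]; exact hz2
  obtain ⟨⟨x, y⟩, hxy⟩ := hS.2.1 (e a) (e_S he hrad hS a)
  exact sch_uniq hS (hS.2.2.2.1 _ (e_S he hrad hS a)) (e_S he hrad hS (-a))
    (mem_conv.mpr hxy) (hsub (mem_conv.mpr hxy))

lemma T_conv {t : Set (X × X)} (htT : t ∈ T) : conv t ∈ T := by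
  obtain ⟨a, rfl⟩ := he.2.2.1 t htT
  rw [conv_e he hrad hS]
  exact he.1 (-a)

lemma e_pair_add {a b : ZMod p × ZMod p} {x y z : X} (h1 : (x, y) ∈ e a)
    (h2 : (y, z) ∈ e b) : (x, z) ∈ e (a + b) := by
  obtain ⟨u, ⟨huS, hu⟩, -⟩ := hS.1 x z
  have : u ∈ cprod S {e a} {e b} :=
    (mem_cprod_iff hS (e_S he hrad hS a) (e_S he hrad hS b) huS hu).mpr ⟨y, h1, h2⟩
  rw [he.2.2.2.2 a b, Set.mem_singleton_iff] at this
  rw [← this]; exact hu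

lemma tf_add (a b : ZMod p × ZMod p) (x : X) :
    tf (e (a + b)) x = tf (e b) (tf (e a) x) := by
  apply tf_eq hS (e_S he hrad hS (a + b)) (e_thin he hrad hS (a + b))
  exact e_pair_add he hrad hS (tf_mem hS (e_S he hrad hS a) (e_thin he hrad hS a) x)
    (tf_mem hS (e_S he hrad hS b) (e_thin he hrad hS b) (tf (e a) x))

lemma coset_eq_of_T {t : Set (X × X)} (htT : t ∈ T) {x z : X} (h : (x, z) ∈ t) :
    coset T x = coset T z := by
  obtain ⟨a, rfl⟩ := he.2.2.1 t htT
  ext w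
  constructor
  · rintro ⟨t', ht', hw⟩
    obtain ⟨b, rfl⟩ := he.2.2.1 t' ht'
    have hzx : (z, x) ∈ e (-a) := by rw [← conv_e he hrad hS]; exact h
    exact ⟨e (-a + b), he.1 _, e_pair_add he hrad hS hzx hw⟩
  · rintro ⟨t', ht', hw⟩
    obtain ⟨b, rfl⟩ := he.2.2.1 t' ht'
    exact ⟨e (a + b), he.1 _, e_pair_add he hrad hS h hw⟩

lemma lstab_of_pair {t s : Set (X × X)} (htT : t ∈ T) (hs : s ∈ S) {x y : X}
    (h1 : (x, y) ∈ s) (h2 : (tf t x, y) ∈ s) : t ∈ lstab S T s := by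
  obtain ⟨u, huS, hcp, hiff⟩ := thin_mul hS (T_S he hrad hS htT) (T_thin he hrad hS htT) hs
  have : u = s := sch_uniq hS huS hs ((hiff x y).mpr h2) h1
  exact ⟨htT, by rw [hcp, this]⟩

lemma lstab_apply {t s : Set (X × X)} (ht : t ∈ lstab S T s) (hs : s ∈ S) {x y : X}
    (hxy : (x, y) ∈ s) : (tf t x, y) ∈ s := by
  obtain ⟨u, huS, hcp, hiff⟩ := thin_mul hS (T_S he hrad hS ht.1) (T_thin he hrad hS ht.1) hs
  have : u = s := by
    have := ht.2
    rw [hcp] at this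
    exact (Set.singleton_eq_singleton_iff.mp this)
  have hx : (x, y) ∈ u := by rw [this]; exact hxy
  exact (hiff x y).mp hx

lemma diag_T : diagRel X ∈ T := he.2.2.2.1 ▸ he.1 0

lemma tf_diag (x : X) : tf (diagRel X) x = x :=
  tf_eq hS (T_S he hrad hS (diag_T he hrad hS)) (T_thin he hrad hS (diag_T he hrad hS)) rfl

lemma diag_lstab {s : Set (X × X)} (hs : s ∈ S) : diagRel X ∈ lstab S T s := by
  obtain ⟨⟨x, y⟩, hxy⟩ := hS.2.1 s hs
  exact lstab_of_pair he hrad hS (diag_T he hrad hS) hs hxy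
    (by rw [tf_diag he hrad hS]; exact hxy)

lemma lstab_add {a b : ZMod p × ZMod p} {s : Set (X × X)} (hs : s ∈ S)
    (ha : e a ∈ lstab S T s) (hb : e b ∈ lstab S T s) : e (a + b) ∈ lstab S T s := by
  obtain ⟨⟨x, y⟩, hxy⟩ := hS.2.1 s hs
  apply lstab_of_pair he hrad hS (he.1 (a + b)) hs hxy
  rw [tf_add he hrad hS]
  exact lstab_apply he hrad hS hb hs (lstab_apply he hrad hS ha hs hxy)

lemma lstab_conv {t s : Set (X × X)} (ht : t ∈ lstab S T s) (hs : s ∈ S) :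
    conv t ∈ lstab S T s := by
  have htT := ht.1
  have htS := T_S he hrad hS htT
  have hth := T_thin he hrad hS htT
  have key : ∀ x y : X, (x, y) ∈ s → (tf (conv t) x, y) ∈ s := by
    intro x y hxy
    set A : Set X := {x' | (x', y) ∈ s} with hA
    have himg : tf t '' A ⊆ A := by
      rintro _ ⟨w, hw, rfl⟩
      exact lstab_apply he hrad hS ht hs hw
    have heq : tf t '' A = A := by
      apply Set.eq_of_subset_of_ncard_le himg
      rw [Set.ncard_image_of_injective A (tf_injective hS htS hth)]
    have hx : x ∈ tf t '' A := heq.symm ▸ (hxy : x ∈ A)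
    obtain ⟨w, hw, hwx⟩ := hx
    have : tf (conv t) x = w := by
      rw [← hwx, tf_inv hS htS hth]
    rw [this]
    exact hw
  obtain ⟨⟨x, y⟩, hxy⟩ := hS.2.1 s hs
  exact lstab_of_pair he hrad hS (T_conv he hrad hS htT) hs hxy (key x y hxy)

lemma card_lstab (hres : thinResidue S = T) {s : Set (X × X)} (hs : s ∈ S) :
    Nat.card (lstab S T s) = nval (conv s) := by
  obtain ⟨x⟩ := X_nonempty hS
  have hcs : conv s ∈ S := hS.2.2.2.1 s hs
  have hnv : nval (conv s) = Nat.card {z : X | (z, x) ∈ s} := nval_eq hS hcs x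
  obtain ⟨z₀, hz₀⟩ := deg_pos hS hcs x
  have hz₀' : (z₀, x) ∈ s := hz₀
  rw [hnv]
  apply Nat.card_congr
  refine Equiv.ofBijective (fun t => ⟨tf t.1 z₀, lstab_apply he hrad hS t.2 hs hz₀'⟩) ⟨?_, ?_⟩
  · rintro ⟨t, ht⟩ ⟨t', ht'⟩ h
    have hv : tf t z₀ = tf t' z₀ := congrArg Subtype.val h
    have h1 : (z₀, tf t z₀) ∈ t := tf_mem hS (T_S he hrad hS ht.1) (T_thin he hrad hS ht.1) z₀
    have h2 : (z₀, tf t z₀) ∈ t' := by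
      rw [hv]; exact tf_mem hS (T_S he hrad hS ht'.1) (T_thin he hrad hS ht'.1) z₀
    exact Subtype.ext (sch_uniq hS (T_S he hrad hS ht.1) (T_S he hrad hS ht'.1) h1 h2)
  · rintro ⟨z, hz⟩
    obtain ⟨t, ⟨htS, ht⟩, -⟩ := hS.1 z₀ z
    have htT : t ∈ T := by
      apply mulconv_sub_T hS hres hs
      exact (mem_cprod_iff hS hs hcs htS ht).mpr ⟨x, hz₀', mem_conv.mpr hz⟩
    have htf : tf t z₀ = z := tf_eq hS (T_S he hrad hS htT) (T_thin he hrad hS htT) ht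
    have hlst : t ∈ lstab S T s :=
      lstab_of_pair he hrad hS htT hs hz₀' (by rw [htf]; exact hz)
    exact ⟨⟨t, hlst⟩, Subtype.ext htf⟩

lemma card_T : Nat.card T = p ^ 2 := by
  have : Nat.card T = Nat.card (ZMod p × ZMod p) := by
    apply (Nat.card_congr (Equiv.ofBijective (fun a => (⟨e a, he.1 a⟩ : T)) ⟨?_, ?_⟩)).symm
    · intro a b h
      exact he.2.1 (congrArg Subtype.val h)
    · rintro ⟨t, ht⟩
      obtain ⟨a, ha⟩ := he.2.2.1 t ht
      exact ⟨a, Subtype.ext ha⟩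
  rw [this, Nat.card_prod, Nat.card_zmod, sq]

lemma card_lstab_cases (hp : p.Prime) {s : Set (X × X)} (hs : s ∈ S) :
    Nat.card (lstab S T s) = 1 ∨ Nat.card (lstab S T s) = p ∨
      Nat.card (lstab S T s) = p ^ 2 := by
  set H : AddSubgroup (ZMod p × ZMod p) :=
    { carrier := {a | e a ∈ lstab S T s}
      zero_mem' := by
        have := diag_lstab he hrad hS hs
        rw [← he.2.2.2.1] at this
        exact this
      add_mem' := fun ha hb => lstab_add he hrad hS hs ha hb
      neg_mem' := by
        intro a ha
        have := lstab_conv he hrad hS ha hs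
        rwa [conv_e he hrad hS] at this } with hH
  have hcard : Nat.card (lstab S T s) = Nat.card H := by
    apply (Nat.card_congr (Equiv.ofBijective
      (fun a : H => (⟨e a.1, a.2⟩ : lstab S T s)) ⟨?_, ?_⟩)).symm
    · intro a b h
      exact Subtype.ext (he.2.1 (congrArg Subtype.val h))
    · rintro ⟨t, ht⟩
      obtain ⟨a, ha⟩ := he.2.2.1 t ht.1
      exact ⟨⟨a, show e a ∈ lstab S T s from ha ▸ ht⟩, Subtype.ext ha⟩
  have hdvd : Nat.card H ∣ p ^ 2 := by
    have := AddSubgroup.card_addSubgroup_dvd_card H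
    rwa [Nat.card_prod, Nat.card_zmod, ← sq] at this
  obtain ⟨i, hi, hieq⟩ := (Nat.dvd_prime_pow hp).mp hdvd
  rw [hcard, hieq]
  interval_cases i
  · left; rfl
  · right; left; exact pow_one p
  · right; right; rfl

/-- The key tool: if `u ∈ a* b` with `u ∉ T` and `L(a) = L(b)` of order `p`,
then `a* b = {u}` and `L(u) = L(a*)`. -/
lemma tool (hp : p.Prime) (hres : thinResidue S = T) {a b u : Set (X × X)}
    (ha : a ∈ S) (hb : b ∈ S) (hL : lstab S T a = lstab S T b)
    (hcard : Nat.card (lstab S T a) = p)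
    (hu : u ∈ cprod S {conv a} {b}) (huT : u ∉ T) :
    cprod S {conv a} {b} = {u} ∧ lstab S T u = lstab S T (conv a) := by
  have hca : conv a ∈ S := hS.2.2.2.1 a ha
  have huS : u ∈ S := hu.1
  obtain ⟨⟨α, β⟩, hαβ⟩ := hS.2.1 u huS
  obtain ⟨z₀, hz₀1, hz₀2⟩ := (mem_cprod_iff hS hca hb huS hαβ).mp hu
  set A : Set X := {z | (α, z) ∈ conv a} with hA
  have hz₀A : z₀ ∈ A := hz₀1
  -- all transitions within A are in the stabilizer of b
  have hAt : ∀ z ∈ A, ∀ z' ∈ A, ∀ t ∈ S, (z, z') ∈ t → t ∈ lstab S T b := by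
    intro z hz z' hz' t htS hzz'
    have htT : t ∈ T := by
      apply mulconv_sub_T hS hres ha
      exact (mem_cprod_iff hS ha hca htS hzz').mpr ⟨α, mem_conv.mp hz, hz'⟩
    have htL : t ∈ lstab S T a := by
      apply lstab_of_pair he hrad hS htT ha (mem_conv.mp hz : (z, α) ∈ a)
      rw [tf_eq hS (T_S he hrad hS htT) (T_thin he hrad hS htT) hzz']
      exact mem_conv.mp hz'
    rw [← hL]; exact htL
  -- moving within A preserves b-neighborhoods
  have hmove : ∀ z ∈ A, ∀ y : X, (z, y) ∈ b → (z₀, y) ∈ b := by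
    intro z hz y hzy
    obtain ⟨t, ⟨htS, ht⟩, -⟩ := hS.1 z z₀
    have htL := hAt z hz z₀ hz₀A t htS ht
    have := lstab_apply he hrad hS htL hb hzy
    rwa [tf_eq hS (T_S he hrad hS htL.1) (T_thin he hrad hS htL.1) ht] at this
  set Y : Set X := {y | (z₀, y) ∈ b} with hY
  have hYcard : Nat.card Y = nval b := (nval_eq hS hb z₀).symm
  have husub : ∀ u' ∈ cprod S {conv a} {b}, {y : X | (α, y) ∈ u'} ⊆ Y := by
    intro u' hu' y hy
    obtain ⟨z, hz1, hz2⟩ := (mem_cprod_iff hS hca hb hu'.1 hy).mp hu'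
    exact hmove z hz1 y hz2
  -- the valency of b is p
  have hnb : nval b = p := by
    have h1 := card_lstab he hrad hS hres hb
    rw [← hL, hcard] at h1
    rw [← nval_conv hS hb, ← h1]
  -- the valency of u is p
  have hnu : nval u = p := by
    have h1 := card_lstab he hrad hS hres huS
    rw [nval_conv hS huS] at h1
    have hle : nval u ≤ p := by
      rw [nval_eq hS huS α, ← hnb, ← hYcard, Nat.card_coe_set_eq,
        Nat.card_coe_set_eq]
      exact Set.ncard_le_ncard (husub u hu) (Set.toFinite Y)
    rcases card_lstab_cases he hrad hS hp huS with h | h | h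
    · exfalso
      apply huT
      rw [← hrad]
      exact ⟨huS, by rw [← h1, h]⟩
    · rw [← h1, h]
    · exfalso
      rw [← h1, h] at hle
      have := hp.two_le
      nlinarith
  -- u picks up all of Y
  have hueq : {y : X | (α, y) ∈ u} = Y := by
    apply Set.eq_of_subset_of_ncard_le (husub u hu)
    rw [← Nat.card_coe_set_eq, ← Nat.card_coe_set_eq, hYcard, hnb,
      ← hnu, nval_eq hS huS α]
  have hsingle : cprod S {conv a} {b} = {u} := by
    ext v
    simp only [Set.mem_singleton_iff]
    constructor
    · intro hv
      obtain ⟨y, hy⟩ := deg_pos hS hv.1 α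
      have hyY : y ∈ Y := husub v hv hy
      rw [← hueq] at hyY
      exact sch_uniq hS hv.1 huS hy hyY
    · rintro rfl; exact hu
  refine ⟨hsingle, ?_⟩
  -- L(u) = L(conv a)
  have hsub : lstab S T (conv a) ⊆ lstab S T u := by
    intro t htL
    have htT := htL.1
    have htS := T_S he hrad hS htT
    have hth := T_thin he hrad hS htT
    set w := tf (conv t) α with hw
    have hfw : tf t w = α := by
      have := tf_inv hS (hS.2.2.2.1 t htS) (by rw [nval_conv hS htS]; exact hth) α
      rwa [conv_conv] at this
    have hwβ : (w, β) ∈ u := by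
      obtain ⟨v, ⟨hvS, hv⟩, -⟩ := hS.1 w β
      have hconvt := lstab_conv he hrad hS htL hca
      have hwz₀ : (w, z₀) ∈ conv a := lstab_apply he hrad hS hconvt hca hz₀1
      have : v ∈ cprod S {conv a} {b} :=
        (mem_cprod_iff hS hca hb hvS hv).mpr ⟨z₀, hwz₀, hz₀2⟩
      rw [hsingle, Set.mem_singleton_iff] at this
      rw [← this]; exact hv
    exact lstab_of_pair he hrad hS htT huS hwβ (by rw [hfw]; exact hαβ)
  have hc1 : Nat.card (lstab S T (conv a)) = p := by
    rw [card_lstab he hrad hS hres hca, conv_conv, ← nval_conv hS ha,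
      ← card_lstab he hrad hS hres ha, hcard]
  have hc2 : Nat.card (lstab S T u) = p := by
    rw [card_lstab he hrad hS hres huS, nval_conv hS huS, hnu]
  refine (Set.eq_of_subset_of_ncard_le hsub ?_).symm
  rw [← Nat.card_coe_set_eq, ← Nat.card_coe_set_eq, hc1, hc2]

end Tgroup
end Dev

set_option linter.unusedSectionVars false
section Final
variable {X : Type*} [Fintype X] {S T : Set (Set (X × X))}
  {p : ℕ} {e : ZMod p × ZMod p → Set (X × X)}

lemma pairStab_eq_lstab (hS : IsScheme S) {x y : X} {s : Set (X × X)}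
    (hs : s ∈ S) (hxy : (x, y) ∈ s) : pairStab S T x y = lstab S T s := by
  ext t
  constructor
  · rintro ⟨htT, h⟩
    exact ⟨htT, h s hs hxy⟩
  · rintro ⟨htT, h⟩
    refine ⟨htT, fun s' hs' hxy' => ?_⟩
    rw [sch_uniq hS hs' hs hxy' hxy]
    exact h

variable (he : IsoElemAb S T p e) (hrad : thinRadical S = T) (hS : IsScheme S)
include he hrad hS

lemma lstab_card_p (hp : p.Prime) {s : Set (X × X)} (hs : s ∈ S)
    (hne1 : lstab S T s ≠ {diagRel X}) (hneT : lstab S T s ≠ T) :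
    Nat.card (lstab S T s) = p := by
  rcases card_lstab_cases he hrad hS hp hs with h | h | h
  · exfalso
    apply hne1
    rw [Nat.card_coe_set_eq] at h
    obtain ⟨t, ht⟩ := Set.ncard_eq_one.mp h
    rw [ht]
    have := diag_lstab he hrad hS hs
    rw [ht, Set.mem_singleton_iff] at this
    rw [this]
  · exact h
  · exfalso
    apply hneT
    have hsub : lstab S T s ⊆ T := fun t ht => ht.1
    apply Set.eq_of_subset_of_ncard_le hsub
    rw [← Nat.card_coe_set_eq, ← Nat.card_coe_set_eq, h, card_T he hrad hS]

lemma rel_not_T {x z : X} {u : Set (X × X)} (hne : coset T x ≠ coset T z)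
    (h : (x, z) ∈ u) : u ∉ T :=
  fun huT => hne (coset_eq_of_T he hrad hS huT h)

lemma lstab_right_sub {s t s' : Set (X × X)} (hs : s ∈ S) (htT : t ∈ T)
    (hs' : s' ∈ cprod S {s} {t}) : lstab S T s ⊆ lstab S T s' := by
  have htS := T_S he hrad hS htT
  have hth := T_thin he hrad hS htT
  have hs'S : s' ∈ S := hs'.1
  intro t' ht'
  obtain ⟨⟨x, y⟩, hxy⟩ := hS.2.1 s hs
  have hkey : ∀ w : X, (w, y) ∈ s → (w, tf t y) ∈ s' := by
    intro w hw
    obtain ⟨v, ⟨hvS, hv⟩, -⟩ := hS.1 w (tf t y)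
    have : v ∈ cprod S {s} {t} :=
      (mem_cprod_iff hS hs htS hvS hv).mpr ⟨y, hw, tf_mem hS htS hth y⟩
    rw [← right_mul_eq hS hs htS hth this hs']
    exact hv
  exact lstab_of_pair he hrad hS ht'.1 hs'S (hkey x hxy)
    (hkey _ (lstab_apply he hrad hS ht' hs hxy))

lemma lstab_right_invariant {s t s' : Set (X × X)} (hs : s ∈ S) (htT : t ∈ T)
    (hs' : s' ∈ cprod S {s} {t}) : lstab S T s' = lstab S T s := by
  refine le_antisymm ?_ (lstab_right_sub he hrad hS hs htT hs')
  have hs'S : s' ∈ S := hs'.1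
  have hctT : conv t ∈ T := T_conv he hrad hS htT
  apply lstab_right_sub he hrad hS hs'S hctT
  -- s ∈ cprod S {s'} {conv t}
  obtain ⟨⟨x, y⟩, hxy⟩ := hS.2.1 s hs
  have htS := T_S he hrad hS htT
  have hth := T_thin he hrad hS htT
  have hxy' : (x, tf t y) ∈ s' := by
    obtain ⟨v, ⟨hvS, hv⟩, -⟩ := hS.1 x (tf t y)
    have : v ∈ cprod S {s} {t} :=
      (mem_cprod_iff hS hs htS hvS hv).mpr ⟨y, hxy, tf_mem hS htS hth y⟩
    rw [← right_mul_eq hS hs htS hth this hs']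
    exact hv
  exact (mem_cprod_iff hS hs'S (T_S he hrad hS hctT) hs hxy).mpr
    ⟨tf t y, hxy', mem_conv.mpr (tf_mem hS htS hth y)⟩

end Final

/-- for pairwise distinct cosets `i, j, k` with all `L_{ij}, L_{jk}, L_{ik}`
proper nontrivial subgroups of `T`, `L_{jk} = L_{ji}` implies `L_{ij} = L_{ik}`;
consequently `j ∈ L_i(M)` implies `L_i(M) = L_j(L_{ji})`. -/
theorem stmt19 {X : Type*} [Fintype X] (p : ℕ) (hp : p.Prime)
    (S T : Set (Set (X × X))) (hS : IsScheme S)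
    (hrad : thinRadical S = T) (hres : thinResidue S = T)
    (hiso : ∃ e : ZMod p × ZMod p → Set (X × X), IsoElemAb S T p e) :
    (∀ x y z : X, coset T x ≠ coset T y → coset T y ≠ coset T z → coset T x ≠ coset T z →
      (pairStab S T x y ≠ {diagRel X} ∧ pairStab S T x y ≠ T) →
      (pairStab S T y z ≠ {diagRel X} ∧ pairStab S T y z ≠ T) →
      (pairStab S T x z ≠ {diagRel X} ∧ pairStab S T x z ≠ T) →
      pairStab S T y z = pairStab S T y x → pairStab S T x y = pairStab S T x z) ∧
    (∀ x y : X, coset T x ≠ coset T y →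
      ∀ M : Set (Set (X × X)), IsClosedSub S M → M ⊆ T → M ≠ {diagRel X} → M ≠ T →
        coset T y ∈ lineOf S T x M →
        lineOf S T x M = lineOf S T y (pairStab S T y x)) := by
  obtain ⟨e, he⟩ := hiso
  constructor
  · -- Part 1
    intro x y z hxy hyz hxz h1 h2 h3 heq
    obtain ⟨s, hsS, hsxy⟩ := sch_ex hS x y
    obtain ⟨b, hbS, hbyz⟩ := sch_ex hS y z
    obtain ⟨u, huS, huxz⟩ := sch_ex hS x z
    have hcsS : conv s ∈ S := hS.2.2.2.1 s hsS
    have hcsyx : (y, x) ∈ conv s := hsxy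
    have e1 : pairStab S T x y = lstab S T s := pairStab_eq_lstab hS hsS hsxy
    have e2 : pairStab S T y x = lstab S T (conv s) := pairStab_eq_lstab hS hcsS hcsyx
    have e3 : pairStab S T y z = lstab S T b := pairStab_eq_lstab hS hbS hbyz
    have e4 : pairStab S T x z = lstab S T u := pairStab_eq_lstab hS huS huxz
    have hcs : Nat.card (lstab S T s) = p :=
      lstab_card_p he hrad hS hp hsS (e1 ▸ h1.1) (e1 ▸ h1.2)
    have hLab : lstab S T (conv s) = lstab S T b := by rw [← e2, ← e3, heq]
    have hcarda : Nat.card (lstab S T (conv s)) = p := by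
      rw [card_lstab he hrad hS hres hcsS, conv_conv, ← nval_conv hS hsS,
        ← card_lstab he hrad hS hres hsS, hcs]
    have humem : u ∈ cprod S {conv (conv s)} {b} := by
      rw [conv_conv]
      exact (mem_cprod_iff hS hsS hbS huS huxz).mpr ⟨y, hsxy, hbyz⟩
    have huT : u ∉ T := rel_not_T he hrad hS hxz huxz
    obtain ⟨-, hL⟩ := tool he hrad hS hp hres hcsS hbS hLab hcarda humem huT
    rw [e1, e4, hL, conv_conv]
  · -- Part 2
    intro x y hxy M hMc hMsub hM1 hMT hmem
    obtain ⟨s, hsS, hsxy⟩ := sch_ex hS x y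
    have hcsS : conv s ∈ S := hS.2.2.2.1 s hsS
    have e2 : pairStab S T y x = lstab S T (conv s) :=
      pairStab_eq_lstab hS hcsS (mem_conv.mpr hsxy)
    rcases Set.mem_insert_iff.mp hmem with hhead | ⟨y', hCy, hne, hps⟩
    · exact absurd hhead.symm hxy
    obtain ⟨t, htT, hyy'⟩ : ∃ t ∈ T, (y, y') ∈ t := by
      have : y' ∈ coset T y := by
        rw [hCy]; exact ⟨diagRel X, diag_T he hrad hS, rfl⟩
      exact this
    obtain ⟨s', hs'S, hs'xy'⟩ := sch_ex hS x y'
    have hMs' : M = lstab S T s' := by rw [← hps, pairStab_eq_lstab hS hs'S hs'xy']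
    have hs'cp : s' ∈ cprod S {s} {t} :=
      (mem_cprod_iff hS hsS (T_S he hrad hS htT) hs'S hs'xy').mpr ⟨y, hsxy, hyy'⟩
    have hMs : M = lstab S T s := by
      rw [hMs', lstab_right_invariant he hrad hS hsS htT hs'cp]
    have hpxy : pairStab S T x y = M := by rw [pairStab_eq_lstab hS hsS hsxy, hMs]
    have hcardM : Nat.card (lstab S T s) = p :=
      lstab_card_p he hrad hS hp hsS (by rw [← hMs]; exact hM1) (by rw [← hMs]; exact hMT)
    have hcarda : Nat.card (lstab S T (conv s)) = p := by
      rw [card_lstab he hrad hS hres hcsS, conv_conv, ← nval_conv hS hsS,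
        ← card_lstab he hrad hS hres hsS, hcardM]
    ext C
    simp only [lineOf, Set.mem_insert_iff, Set.mem_setOf_eq]
    constructor
    · rintro (rfl | ⟨z, hCz, hzx, hpz⟩)
      · right; exact ⟨x, rfl, hxy, rfl⟩
      · by_cases hzy : coset T z = coset T y
        · left; rw [hCz, hzy]
        · right
          obtain ⟨bz, hbzS, hbz⟩ := sch_ex hS x z
          have hpzl : pairStab S T x z = lstab S T bz := pairStab_eq_lstab hS hbzS hbz
          have hLab : lstab S T s = lstab S T bz := by rw [← hMs, ← hpz, hpzl]
          obtain ⟨v, hvS, hvyz⟩ := sch_ex hS y z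
          have hvmem : v ∈ cprod S {conv s} {bz} :=
            (mem_cprod_iff hS hcsS hbzS hvS hvyz).mpr ⟨x, hsxy, hbz⟩
          have hvT : v ∉ T := rel_not_T he hrad hS (fun h => hzy h.symm) hvyz
          obtain ⟨-, hL⟩ := tool he hrad hS hp hres hsS hbzS hLab hcardM hvmem hvT
          exact ⟨z, hCz, hzy, by rw [pairStab_eq_lstab hS hvS hvyz, hL, ← e2]⟩
    · rintro (rfl | ⟨z, hCz, hzy, hpz⟩)
      · right; exact ⟨y, rfl, fun h => hxy h.symm, hpxy⟩
      · by_cases hzx : coset T z = coset T x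
        · left; rw [hCz, hzx]
        · right
          obtain ⟨bz, hbzS, hbz⟩ := sch_ex hS y z
          have hpzl : pairStab S T y z = lstab S T bz := pairStab_eq_lstab hS hbzS hbz
          have hLab : lstab S T (conv s) = lstab S T bz := by rw [← e2, ← hpz, hpzl]
          obtain ⟨u', hu'S, hu'xz⟩ := sch_ex hS x z
          have hu'mem : u' ∈ cprod S {conv (conv s)} {bz} := by
            rw [conv_conv]
            exact (mem_cprod_iff hS hsS hbzS hu'S hu'xz).mpr ⟨y, hsxy, hbz⟩
          have hu'T : u' ∉ T := rel_not_T he hrad hS (fun h => hzx h.symm) hu'xz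
          obtain ⟨-, hL⟩ := tool he hrad hS hp hres hcsS hbzS hLab hcarda hu'mem hu'T
          refine ⟨z, hCz, hzx, ?_⟩
          rw [pairStab_eq_lstab hS hu'S hu'xz, hL, conv_conv, ← hMs]
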